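/- arXiv:math/0008201 — 2 statements merged into one kernel-verified Lean document; each statement's English description precedes it below -/
import Mathlib

section
/- Let γ be a non-crossing (ε)-contour at σ in Λ(l). Then (1/2)Δ_γ H^ω_{Λ(l)}(σ) ≥ |γ̲| − ε ∑_{y ∈ V_ex(γ̄)} ω_y ≥ |γ̲| − |I(γ)| ≥ 0, where γ̄ = ∂Q(Λ(l)) ∩ ∂Q(Θ̃) and I(γ) = V_ex(γ̄). -/
open Finset

/-! ### Basic lattice notions for the 2-D Ising model on the square Λ(l) -/

abbrev Site := ℤ × ℤ

/-- `l¹`-distance on `ℤ²`. -/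
def d1 (x y : Site) : ℤ := |x.1 - y.1| + |x.2 - y.2|

/-- `l∞`-distance on `ℤ²`. -/
def dinf (x y : Site) : ℤ := max |x.1 - y.1| |x.2 - y.2|

/-- There is a path from `x` to `y` inside `S` with steps of `d`-distance 1. -/
def ChainIn (d : Site → Site → ℤ) (S : Set Site) (x y : Site) : Prop :=
  ∃ L : List Site, L.Chain' (fun a b => d a b = 1) ∧ L.head? = some x ∧
    L.getLast? = some y ∧ ∀ a ∈ L, a ∈ S

/-- `S` is connected with respect to steps of `d`-distance 1. -/
def ConnIn (d : Site → Site → ℤ) (S : Set Site) : Prop :=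
  ∀ x ∈ S, ∀ y ∈ S, ChainIn d S x y

def lamLo (l : ℕ) : ℤ := 1 - (((l + 1) / 2 : ℕ) : ℤ)
def lamHi (l : ℕ) : ℤ := ((l / 2 : ℕ) : ℤ)

/-- The lamBox the box. -/
noncomputable def lamBox (l : ℕ) : Finset Site := Finset.Icc (lamLo l, lamLo l) (lamHi l, lamHi l)

/-- The exterior boundary `∂_ex Λ(l)`. -/
def extBdry (l : ℕ) : Set Site := {y | y ∉ lamBox l ∧ ∃ x ∈ lamBox l, d1 x y = 1}

/-- An interval of `∂_ex Λ(l)` : an `l∞`-connected subset of it. -/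
def IsBdryInterval (l : ℕ) (I : Finset Site) : Prop :=
  (↑I : Set Site) ⊆ extBdry l ∧ ConnIn dinf ↑I

/-- The four nearest neighbours of a site. -/
def nbrs (x : Site) : Finset Site :=
  {(x.1 + 1, x.2), (x.1 - 1, x.2), (x.1, x.2 + 1), (x.1, x.2 - 1)}

/-- A dual bond, recorded by its two endpoints `v`, a dual vertex `v` standing for the
point `v + (1/2, 1/2)` of the dual lattice. -/
abbrev DBond := Sym2 Site

/-- The dual bond of the nearest-neighbour bond `{x, y}`. -/
def dualBond (x y : Site) : DBond :=
  if x.2 = y.2 then s((min x.1 y.1, x.2 - 1), (min x.1 y.1, x.2))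
  else s((x.1 - 1, min x.2 y.2), (x.1, min x.2 y.2))

/-- `∂Q(Θ)` : the set of dual bonds separating `Θ` from its complement. -/
def contourOf (Θ : Finset Site) : Finset DBond :=
  Θ.biUnion fun x => ((nbrs x).filter (· ∉ Θ)).image fun y => dualBond x y

/-- `Θ` and its complement are `l¹`-connected, so that `∂Q(Θ)` is a contour. -/
def IsContourRegion (Θ : Finset Site) : Prop :=
  ConnIn d1 ↑Θ ∧ ConnIn d1 ((↑Θ : Set Site)ᶜ)

/-- `∂Q(Λ(l))`, as a set of dual bonds. -/
noncomputable def boxBdry (l : ℕ) : Finset DBond := contourOf (lamBox l)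

/-- The dual vertex `v` lies on the side `F_l^j` of `Q(Λ(l))` (`j ∈ {1,-1,2,-2}` for
right, left, top, bottom). -/
def onSide (l : ℕ) (j : ℤ) (v : Site) : Prop :=
  (j = 1 ∧ v.1 = lamHi l ∧ lamLo l - 1 ≤ v.2 ∧ v.2 ≤ lamHi l) ∨
  (j = -1 ∧ v.1 = lamLo l - 1 ∧ lamLo l - 1 ≤ v.2 ∧ v.2 ≤ lamHi l) ∨
  (j = 2 ∧ v.2 = lamHi l ∧ lamLo l - 1 ≤ v.1 ∧ v.1 ≤ lamHi l) ∨
  (j = -2 ∧ v.2 = lamLo l - 1 ∧ lamLo l - 1 ≤ v.1 ∧ v.1 ≤ lamHi l)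

/-- The set of dual bonds `γ` meets the side `F_l^j`. -/
def touches (l : ℕ) (j : ℤ) (γ : Finset DBond) : Prop :=
  ∃ e ∈ γ, ∃ v : Site, v ∈ e ∧ onSide l j v

def HorizCrossing (l : ℕ) (γ : Finset DBond) : Prop := touches l 1 γ ∧ touches l (-1) γ
def VertCrossing (l : ℕ) (γ : Finset DBond) : Prop := touches l 2 γ ∧ touches l (-2) γ

/-- `γ` is neither horizontally nor vertically crossing. -/
def NonCrossing (l : ℕ) (γ : Finset DBond) : Prop :=
  ¬ (HorizCrossing l γ ∨ VertCrossing l γ)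

/-- Two dual bonds are adjacent if they share a dual vertex. -/
def DAdj (a b : DBond) : Prop := ∃ v : Site, v ∈ a ∧ v ∈ b

/-- A set of dual bonds is connected (via shared dual vertices). -/
def DConn (S : Finset DBond) : Prop :=
  ∀ e ∈ S, ∀ f ∈ S, ∃ L : List DBond, L.Chain' DAdj ∧ L.head? = some e ∧
    L.getLast? = some f ∧ ∀ a ∈ L, a ∈ S

/-- Dual bonds separating `Θt` from `Λ(l) \ Θt` inside the lamBox. -/
noncomputable def interiorBdry (l : ℕ) (Θt : Finset Site) : Finset DBond :=
  Θt.biUnion fun x => ((nbrs x).filter fun y => y ∈ lamBox l ∧ y ∉ Θt).image fun y => dualBond x y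

/-- The sites of `Λ(l)` along the side `F_l^j`. -/
def sideSites (l : ℕ) (j : ℤ) (x : Site) : Prop :=
  x ∈ lamBox l ∧ ((j = 1 ∧ x.1 = lamHi l) ∨ (j = -1 ∧ x.1 = lamLo l) ∨
    (j = 2 ∧ x.2 = lamHi l) ∨ (j = -2 ∧ x.2 = lamLo l))

/-- The data of the distinguished connected component `γ̲ = γu` of `γ \ ∂Q(Λ(l))` and of the
region `Θ̃ = Θt` into which a non-crossing contour `γ = ∂Q(Θ)` divides the lamBox: `γu` is a
connected component of `γ \ ∂Q(Λ(l))` dividing `Λ(l)` into the `l¹`-connected pieces `Θt` and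
`Λ(l) \ Θt`, with `Θ ⊆ Θt` and `F_l^i ∪ F_l^j ⊆ ∂Q(Λ(l) \ Θt)` for untouched sides `i, j`. -/
def UnderlineData (l : ℕ) (Θ : Finset Site) (γu : Finset DBond) (Θt : Finset Site) : Prop :=
  γu ⊆ contourOf Θ \ boxBdry l ∧ DConn γu ∧
  (∀ e ∈ contourOf Θ \ boxBdry l, e ∉ γu → ∀ f ∈ γu, ¬ DAdj e f) ∧
  Θ ⊆ Θt ∧ Θt ⊆ lamBox l ∧ ConnIn d1 ↑Θt ∧ ConnIn d1 ↑(lamBox l \ Θt) ∧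
  interiorBdry l Θt = γu ∧
  ∃ i j : ℤ, (i = 1 ∨ i = -1) ∧ (j = 2 ∨ j = -2) ∧
    ¬ touches l i (contourOf Θ) ∧ ¬ touches l j (contourOf Θ) ∧
    (∀ x, sideSites l i x → x ∉ Θt) ∧ (∀ x, sideSites l j x → x ∉ Θt)

/-- `γ̄ = ∂Q(Λ(l)) ∩ ∂Q(Θ̃)`. -/
noncomputable def gammaBar (l : ℕ) (Θt : Finset Site) : Finset DBond := boxBdry l ∩ contourOf Θt

/-- `V_ex(γ)` : sites of the exterior boundary attached to dual bonds of `γ`. -/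
noncomputable def Vex (l : ℕ) (γ : Finset DBond) : Finset Site :=
  (lamBox l).biUnion fun x => (nbrs x).filter fun y => y ∉ lamBox l ∧ dualBond x y ∈ γ

/-- `T_Θ` : flip the spins in `Θ`. -/
def flipC (Θ : Finset Site) (σ : Site → ℤ) : Site → ℤ :=
  fun x => if x ∈ Θ then -σ x else σ x

/-- The Ising Hamiltonian `H^ω_{Λ(l)}(σ)` with boundary condition `ω`. -/
noncomputable def Ham (l : ℕ) (ω : Site → ℝ) (σ : Site → ℤ) : ℝ :=
  -(1/2) * ∑ x ∈ lamBox l, ∑ y ∈ (nbrs x).filter (· ∈ lamBox l), ((σ x * σ y : ℤ) : ℝ)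
    - ∑ x ∈ lamBox l, ∑ y ∈ (nbrs x).filter (· ∉ lamBox l), (σ x : ℝ) * ω y

/-- `Δ_{γ₁,…,γ_p} H^ω_{Λ(l)}(σ) = H(σ) - H(T_{γ₁}∘⋯∘T_{γ_p} σ)`, the contours being
recorded by their regions `Θ(γ_j)`. -/
noncomputable def dH (l : ℕ) (ω : Site → ℝ) (Θs : List (Finset Site)) (σ : Site → ℤ) : ℝ :=
  Ham l ω σ - Ham l ω (Θs.foldr flipC σ)

/-- `C` is an (ε)-cluster in `Λ(l)` at `σ` : a maximal `l¹`-connected component of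
`{x ∈ Λ(l) : σ_x = ε}`. -/
def IsCluster (l : ℕ) (σ : Site → ℤ) (ε : ℤ) (C : Finset Site) : Prop :=
  C.Nonempty ∧ (∀ x ∈ C, x ∈ lamBox l ∧ σ x = ε) ∧ ConnIn d1 ↑C ∧
  ∀ y ∈ lamBox l, σ y = ε → (∃ x ∈ C, d1 x y = 1) → y ∈ C

/-- The `l¹`-connected component of `x` within `S`. -/
def l1Comp (S : Set Site) (x : Site) : Set Site := {y | ChainIn d1 S x y}

/-- `C` together with the bounded components of its complement; `∂Q(fill C)` is the outer
boundary of `Q(C)`. -/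
def fill (C : Finset Site) : Set Site :=
  ↑C ∪ {x | (l1Comp ((↑C : Set Site)ᶜ) x).Finite}

/-- `Θ` is the region `Θ(γ)` of an (ε)-contour `γ` in `Λ(l)` at `σ`. -/
def IsEContour (l : ℕ) (σ : Site → ℤ) (ε : ℤ) (Θ : Finset Site) : Prop :=
  ∃ C : Finset Site, IsCluster l σ ε C ∧ (↑Θ : Set Site) = fill C

/-- A dual bond is horizontal. -/
def isHorizD (e : DBond) : Prop := ∃ v w : Site, e = s(v, w) ∧ v.2 = w.2

/-- A dual bond is vertical. -/
def isVertD (e : DBond) : Prop := ∃ v w : Site, e = s(v, w) ∧ v.1 = w.1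

open Classical in
/-- The number of horizontal dual bonds in `γ`. -/
noncomputable def horizCount (γ : Finset DBond) : ℕ := (γ.filter isHorizD).card

open Classical in
/-- The number of vertical dual bonds in `γ`. -/
noncomputable def vertCount (γ : Finset DBond) : ℕ := (γ.filter isVertD).card

/-! ### Glauber dynamics -/

/-- Configurations on a finite `Λ ⊂ ℤ²` (`true` = spin `+1`, `false` = spin `-1`). -/
abbrev Cfg (Λ : Finset Site) := ↥Λ → Bool

/-- The spin value of a Boolean. -/
def spinVal (b : Bool) : ℝ := if b then 1 else -1

/-- The Ising Hamiltonian on a general finite `Λ`. -/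
noncomputable def HamG (Λ : Finset Site) (ω : Site → ℝ) (σ : Cfg Λ) : ℝ :=
  -(1/2) * ∑ x : ↥Λ, ∑ y : ↥Λ, (if d1 ↑x ↑y = 1 then spinVal (σ x) * spinVal (σ y) else 0)
    - ∑ x : ↥Λ, ∑ y ∈ (nbrs ↑x).filter (· ∉ Λ), spinVal (σ x) * ω y

/-- The finite-volume Gibbs measure `μ^ω_Λ` at inverse temperature `β`. -/
noncomputable def gibbs (Λ : Finset Site) (ω : Site → ℝ) (β : ℝ) (σ : Cfg Λ) : ℝ :=
  Real.exp (-β * HamG Λ ω σ) / ∑ τ : Cfg Λ, Real.exp (-β * HamG Λ ω τ)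

/-- The mean of `f` under the weights `μ`. -/
noncomputable def meanW (Λ : Finset Site) (μ f : Cfg Λ → ℝ) : ℝ := ∑ σ : Cfg Λ, μ σ * f σ

/-- `σ^x` : flip the spin at `x`. -/
def flipAt (Λ : Finset Site) (σ : Cfg Λ) (x : ↥Λ) : Cfg Λ := Function.update σ x (!(σ x))

/-- The generator `A^ω_Λ` of the stochastic Ising model with flip rates `q`. -/
noncomputable def genA (Λ : Finset Site) (q : ↥Λ → Cfg Λ → ℝ) (f : Cfg Λ → ℝ) (σ : Cfg Λ) : ℝ :=
  ∑ x : ↥Λ, q x σ * (f (flipAt Λ σ x) - f σ)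

/-- The variance `μ(|f - μf|²)`. -/
noncomputable def varW (Λ : Finset Site) (μ f : Cfg Λ → ℝ) : ℝ :=
  meanW Λ μ (fun σ => |f σ - meanW Λ μ f| ^ 2)

/-- The spectral gap `gap(Λ, ω, β)` : the infimum of the Rayleigh quotients
`-μ(f A f) / μ(|f - μf|²)`. -/
noncomputable def specGap (Λ : Finset Site) (ω : Site → ℝ) (β : ℝ)
    (q : ↥Λ → Cfg Λ → ℝ) : ℝ :=
  sInf { r | ∃ f : Cfg Λ → ℝ, varW Λ (gibbs Λ ω β) f ≠ 0 ∧
    r = (- meanW Λ (gibbs Λ ω β) fun σ => f σ * genA Λ q f σ) / varW Λ (gibbs Λ ω β) f }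

/-- The `±1`-spin function of a configuration on `Λ(l)` (`0` outside the lamBox). -/
noncomputable def toSpin (l : ℕ) (σ : Cfg (lamBox l)) : Site → ℤ :=
  fun x => if h : x ∈ lamBox l then (if σ ⟨x, h⟩ then 1 else -1) else 0

/-- The magnetization at the origin, `μ^ω_{Λ(l)}(σ₀)`. -/
noncomputable def magZero (l : ℕ) (ω : Site → ℝ) (β : ℝ) : ℝ :=
  ∑ σ : Cfg (lamBox l), gibbs (lamBox l) ω β σ * ((toSpin l σ (0, 0) : ℤ) : ℝ)

/-- The favoured sign `ε_{l,ω}`. -/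
noncomputable def epsSign (l : ℕ) (ω : Site → ℝ) (β : ℝ) : ℤ :=
  if 0 ≤ magZero l ω β then 1 else -1

/-- The trap event `Γ_l` : some (ε)-contour `γ` at `σ` meets `∂Q(Λ(l))` and has
`|γ| ≥ 2δ₁ l`. -/
def GammaEvent (l : ℕ) (δ₁ : ℝ) (ε : ℤ) : Set (Cfg (lamBox l)) :=
  {σ | ∃ Θ : Finset Site, IsEContour l (toSpin l σ) ε Θ ∧
    (contourOf Θ ∩ boxBdry l).Nonempty ∧ 2 * δ₁ * l ≤ ((contourOf Θ).card : ℝ)}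

open Classical in
/-- The Gibbs probability of an event `S ⊂ Ω_{Λ(l)}`. -/
noncomputable def probOf (l : ℕ) (ω : Site → ℝ) (β : ℝ) (S : Set (Cfg (lamBox l))) : ℝ :=
  ∑ σ ∈ Finset.univ.filter (· ∈ S), gibbs (lamBox l) ω β σ

/-- Union of the contours of a list of regions. -/
def unionB (L : List (Finset Site)) : Finset DBond :=
  L.foldr (fun Θ s => contourOf Θ ∪ s) ∅

/-- Union of a list of regions. -/
def unionR (L : List (Finset Site)) : Finset Site :=
  L.foldr (· ∪ ·) ∅

/-!
Flipping the spins of `Θ` only changes the terms of the Hamiltonian across `γ = ∂Q(Θ)`: since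
`σ = ε` just inside `γ` and `σ = -ε` just outside it in `Λ(l)`, each bond of `γ \ ∂Q(Λ(l))`
contributes `2` and each site `y ∈ V_ex(γ)` contributes `-2εω_y`, so
`(1/2)Δ_γ H = |γ \ ∂Q(Λ(l))| - ε ∑_{y ∈ V_ex(γ)} ω_y`.

Each `y ∈ I(γ) = V_ex(γ̄)` is the exterior neighbour of some `x ∈ Θ̃` on a side of `Λ(l)`. The
opposite side does not meet `Θ̃`, so the lattice line from that side to `x` crosses `γ̲`, and, if
`x ∉ Θ`, it also crosses `γ \ (∂Q(Λ(l)) ∪ γ̲)` after it last enters `Θ̃`. All such `y` on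
horizontal lines lie in one exterior column, and those on vertical lines in one exterior row,
so distinct `y` give distinct lines. Hence `|I(γ)| ≤ |γ̲|` and
`|I(γ) \ V_ex(γ)| ≤ |γ \ (∂Q(Λ(l)) ∪ γ̲)|`, and `|ω_y| ≤ 1` finishes the proof.
-/

section Lattice

lemma mem_nbrs_iff {x y : Site} :
    y ∈ nbrs x ↔ y = (x.1 + 1, x.2) ∨ y = (x.1 - 1, x.2) ∨
      y = (x.1, x.2 + 1) ∨ y = (x.1, x.2 - 1) := by
  simp [nbrs]

lemma nbrs_symm {x y : Site} (h : y ∈ nbrs x) : x ∈ nbrs y := by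
  rcases mem_nbrs_iff.1 h with rfl | rfl | rfl | rfl <;> simp [mem_nbrs_iff]

lemma d1_eq_one_of_mem_nbrs {x y : Site} (h : y ∈ nbrs x) : d1 x y = 1 := by
  rcases mem_nbrs_iff.1 h with rfl | rfl | rfl | rfl <;> simp [d1]

lemma mem_lamBox {l : ℕ} {x : Site} :
    x ∈ lamBox l ↔ lamLo l ≤ x.1 ∧ x.1 ≤ lamHi l ∧ lamLo l ≤ x.2 ∧ x.2 ≤ lamHi l := by
  simp only [lamBox, Finset.mem_Icc, Prod.le_def]; tauto

lemma dualBond_comm {x y : Site} (h : y ∈ nbrs x) : dualBond y x = dualBond x y := by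
  rcases mem_nbrs_iff.1 h with rfl | rfl | rfl | rfl <;> simp [dualBond]
  omega

lemma dualBond_inj {x y x' y' : Site} (h : y ∈ nbrs x) (h' : y' ∈ nbrs x')
    (he : dualBond x y = dualBond x' y') : (x = x' ∧ y = y') ∨ (x = y' ∧ y = x') := by
  obtain ⟨a, b⟩ := x; obtain ⟨c, d⟩ := x'
  rcases mem_nbrs_iff.1 h with rfl | rfl | rfl | rfl <;>
    rcases mem_nbrs_iff.1 h' with rfl | rfl | rfl | rfl <;>
    simp only [dualBond] at he <;> split_ifs at he <;>
    simp at he ⊢ <;> omega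

lemma mem_contourOf {Θ : Finset Site} {e : DBond} :
    e ∈ contourOf Θ ↔ ∃ x ∈ Θ, ∃ y ∈ nbrs x, y ∉ Θ ∧ e = dualBond x y := by
  simp only [contourOf, Finset.mem_biUnion, Finset.mem_image, Finset.mem_filter, and_assoc,
    eq_comm (a := e)]

lemma mem_interiorBdry {l : ℕ} {Θt : Finset Site} {e : DBond} :
    e ∈ interiorBdry l Θt ↔
      ∃ x ∈ Θt, ∃ y ∈ nbrs x, y ∈ lamBox l ∧ y ∉ Θt ∧ e = dualBond x y := by
  simp only [interiorBdry, Finset.mem_biUnion, Finset.mem_image, Finset.mem_filter, and_assoc,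
    eq_comm (a := e)]

lemma mem_Vex {l : ℕ} {γ : Finset DBond} {y : Site} :
    y ∈ Vex l γ ↔ ∃ x ∈ lamBox l, y ∈ nbrs x ∧ y ∉ lamBox l ∧ dualBond x y ∈ γ := by
  simp only [Vex, Finset.mem_biUnion, Finset.mem_filter]

lemma dualBond_mem_contourOf_iff {Θ : Finset Site} {x y : Site} (hy : y ∈ nbrs x) :
    dualBond x y ∈ contourOf Θ ↔ (x ∈ Θ ∧ y ∉ Θ) ∨ (y ∈ Θ ∧ x ∉ Θ) := by
  refine ⟨fun he => ?_, ?_⟩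
  · obtain ⟨x', hx', y', hy', hy'Θ, he'⟩ := mem_contourOf.1 he
    rcases dualBond_inj hy hy' he' with ⟨rfl, rfl⟩ | ⟨rfl, rfl⟩
    exacts [Or.inl ⟨hx', hy'Θ⟩, Or.inr ⟨hx', hy'Θ⟩]
  · rintro (⟨hx, hyΘ⟩ | ⟨hyΘ, hx⟩)
    · exact mem_contourOf.2 ⟨x, hx, y, hy, hyΘ, rfl⟩
    · exact mem_contourOf.2 ⟨y, hyΘ, x, nbrs_symm hy, hx, (dualBond_comm hy).symm⟩

lemma dualBond_mem_interiorBdry_iff {l : ℕ} {Θt : Finset Site} {x y : Site} (hy : y ∈ nbrs x) :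
    dualBond x y ∈ interiorBdry l Θt ↔
      (x ∈ Θt ∧ y ∈ lamBox l ∧ y ∉ Θt) ∨ (y ∈ Θt ∧ x ∈ lamBox l ∧ x ∉ Θt) := by
  refine ⟨fun he => ?_, ?_⟩
  · obtain ⟨x', hx', y', hy', h1, h2, he'⟩ := mem_interiorBdry.1 he
    rcases dualBond_inj hy hy' he' with ⟨rfl, rfl⟩ | ⟨rfl, rfl⟩
    exacts [Or.inl ⟨hx', h1, h2⟩, Or.inr ⟨hx', h1, h2⟩]
  · rintro (⟨hx, h1, h2⟩ | ⟨hyΘ, h1, h2⟩)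
    · exact mem_interiorBdry.2 ⟨x, hx, y, hy, h1, h2, rfl⟩
    · exact mem_interiorBdry.2 ⟨y, hyΘ, x, nbrs_symm hy, h1, h2, (dualBond_comm hy).symm⟩

lemma dualBond_mem_boxBdry_iff {l : ℕ} {x y : Site} (hy : y ∈ nbrs x) (hx : x ∈ lamBox l) :
    dualBond x y ∈ boxBdry l ↔ y ∉ lamBox l := by
  rw [boxBdry, dualBond_mem_contourOf_iff hy]; tauto

lemma eq_of_mem_nbrs_of_not_mem_lamBox {l : ℕ} {x x' y : Site} (hy : y ∉ lamBox l)
    (hx : x ∈ lamBox l) (hx' : x' ∈ lamBox l) (h : y ∈ nbrs x) (h' : y ∈ nbrs x') : x = x' := by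
  obtain ⟨a, b⟩ := x; obtain ⟨c, d⟩ := x'
  rw [mem_lamBox] at hx hx' hy
  rcases mem_nbrs_iff.1 h with rfl | rfl | rfl | rfl <;>
    rcases mem_nbrs_iff.1 h' with hh | hh | hh | hh <;>
    simp only [Prod.mk.injEq] at hh hx hx' hy ⊢ <;> omega

lemma Vex_subset_extBdry (l : ℕ) (γ : Finset DBond) : ↑(Vex l γ) ⊆ extBdry l := by
  intro y hy
  obtain ⟨x, hx, hyx, hyΛ, -⟩ := mem_Vex.1 hy
  exact ⟨hyΛ, x, hx, d1_eq_one_of_mem_nbrs hyx⟩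

end Lattice

section Cluster

lemma ChainIn.cons {d : Site → Site → ℤ} {S : Set Site} {x y z : Site} (hx : x ∈ S)
    (hxy : d x y = 1) (h : ChainIn d S y z) : ChainIn d S x z := by
  obtain ⟨_ | ⟨b, L⟩, hc, hh, hl, hm⟩ := h
  · simp at hh
  obtain rfl : b = y := by simpa using hh
  refine ⟨x :: b :: L, hc.cons_cons hxy, rfl, by rwa [List.getLast?_cons_cons], ?_⟩
  simpa [hx] using hm

lemma mem_of_mem_fill_of_mem_nbrs {C : Finset Site} {x y : Site} (hx : x ∈ fill C)
    (hy : y ∈ nbrs x) (hyC : y ∉ fill C) : x ∈ C := by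
  by_contra hxC
  have hxfin : (l1Comp ((↑C : Set Site)ᶜ) x).Finite := hx.resolve_left hxC
  refine hyC (Or.inr (hxfin.subset fun z hz => ?_))
  exact ChainIn.cons (S := (↑C : Set Site)ᶜ) hxC (d1_eq_one_of_mem_nbrs hy) hz

variable {l : ℕ} {σ : Site → ℤ} {ε : ℤ} {C Θ : Finset Site} {x y : Site}

lemma IsCluster.spin_eq_of_mem_nbrs (hC : IsCluster l σ ε C) (hfill : (↑Θ : Set Site) = fill C)
    (hx : x ∈ Θ) (hy : y ∈ nbrs x) (hyΘ : y ∉ Θ) : σ x = ε := by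
  rw [← Finset.mem_coe, hfill] at hx hyΘ
  exact (hC.2.1 x (mem_of_mem_fill_of_mem_nbrs hx hy hyΘ)).2

lemma IsCluster.spin_ne_of_mem_nbrs (hC : IsCluster l σ ε C) (hfill : (↑Θ : Set Site) = fill C)
    (hx : x ∈ Θ) (hy : y ∈ nbrs x) (hyΘ : y ∉ Θ) (hyΛ : y ∈ lamBox l) : σ y ≠ ε := by
  rw [← Finset.mem_coe, hfill] at hx hyΘ
  have hxC := mem_of_mem_fill_of_mem_nbrs hx hy hyΘ
  exact fun hyε => hyΘ (Or.inl (hC.2.2.2 y hyΛ hyε ⟨x, hxC, d1_eq_one_of_mem_nbrs hy⟩))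

end Cluster

section Energy

variable {l : ℕ}

noncomputable def boxPairs (l : ℕ) : Finset (Site × Site) :=
  (lamBox l ×ˢ lamBox l).filter fun p => p.2 ∈ nbrs p.1

lemma sum_sum_nbrs_lamBox_eq_sum_boxPairs {M : Type*} [AddCommMonoid M] (f : Site → Site → M) :
    ∑ x ∈ lamBox l, ∑ y ∈ (nbrs x).filter (· ∈ lamBox l), f x y
      = ∑ p ∈ boxPairs l, f p.1 p.2 := by
  rw [boxPairs, Finset.sum_filter, Finset.sum_product]
  refine Finset.sum_congr rfl fun x _ => ?_
  rw [← Finset.sum_filter, Finset.filter_mem_eq_inter, Finset.inter_comm,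
    ← Finset.filter_mem_eq_inter]

lemma swap_mem_boxPairs {p : Site × Site} (hp : p ∈ boxPairs l) : p.swap ∈ boxPairs l := by
  simp only [boxPairs, Finset.mem_filter, Finset.mem_product] at hp ⊢
  exact ⟨⟨hp.1.2, hp.1.1⟩, nbrs_symm hp.2⟩

lemma sum_boxPairs_swap {M : Type*} [AddCommMonoid M] (f : Site × Site → M) :
    ∑ p ∈ boxPairs l, f p.swap = ∑ p ∈ boxPairs l, f p :=
  Finset.sum_nbij' Prod.swap Prod.swap (fun _ => swap_mem_boxPairs) (fun _ => swap_mem_boxPairs)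
    (fun _ _ => rfl) (fun _ _ => rfl) (fun _ _ => rfl)

lemma card_boxPairs_filter_eq_card_contourOf_sdiff {Θ : Finset Site} (hΘ : Θ ⊆ lamBox l) :
    ((boxPairs l).filter fun p => p.1 ∈ Θ ∧ p.2 ∉ Θ).card = (contourOf Θ \ boxBdry l).card := by
  refine Finset.card_nbij (fun p => dualBond p.1 p.2) ?_ ?_ ?_
  · intro p hp
    simp only [Finset.mem_coe, Finset.mem_filter, boxPairs, Finset.mem_product] at hp
    obtain ⟨⟨⟨h1, h2⟩, h3⟩, h4, h5⟩ := hp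
    exact Finset.mem_sdiff.2 ⟨(dualBond_mem_contourOf_iff h3).2 (Or.inl ⟨h4, h5⟩),
      fun h => (dualBond_mem_boxBdry_iff h3 h1).1 h h2⟩
  · intro p hp q hq hpq
    simp only [Finset.coe_filter, boxPairs, Finset.mem_filter, Finset.mem_product,
      Set.mem_ofPred_eq] at hp hq
    rcases dualBond_inj hp.1.2 hq.1.2 hpq with ⟨h1, h2⟩ | ⟨h1, -⟩
    · exact Prod.ext h1 h2
    · exact absurd (h1 ▸ hp.2.1) hq.2.2
  · intro e he
    obtain ⟨he, heΛ⟩ := Finset.mem_sdiff.1 he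
    obtain ⟨x, hx, y, hy, hyΘ, rfl⟩ := mem_contourOf.1 he
    have hyΛ : y ∈ lamBox l := by
      by_contra hyΛ
      exact heΛ ((dualBond_mem_boxBdry_iff hy (hΘ hx)).2 hyΛ)
    refine ⟨(x, y), ?_, rfl⟩
    simp only [Finset.coe_filter, boxPairs, Finset.mem_filter, Finset.mem_product,
      Set.mem_ofPred_eq]
    exact ⟨⟨⟨hΘ hx, hyΛ⟩, hy⟩, hx, hyΘ⟩

lemma sum_Vex {M : Type*} [AddCommMonoid M] (γ : Finset DBond) (f : Site → M) :
    ∑ y ∈ Vex l γ, f y = ∑ x ∈ lamBox l,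
      ∑ y ∈ (nbrs x).filter (fun y => y ∉ lamBox l ∧ dualBond x y ∈ γ), f y := by
  refine Finset.sum_biUnion fun a ha b hb hab => Finset.disjoint_left.2 fun y hya hyb => ?_
  rw [Finset.mem_filter] at hya hyb
  exact hab (eq_of_mem_nbrs_of_not_mem_lamBox hya.2.1 ha hb hya.1 hyb.1)

variable {σ : Site → ℤ} {ε : ℤ} {C Θ : Finset Site}

lemma spin_mul_spin_eq_neg_one (hσ : ∀ x ∈ lamBox l, σ x = 1 ∨ σ x = -1)
    (hε : ε = 1 ∨ ε = -1) (hC : IsCluster l σ ε C) (hfill : (↑Θ : Set Site) = fill C)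
    {x y : Site} (hx : x ∈ Θ) (hy : y ∈ nbrs x) (hyΘ : y ∉ Θ) (hyΛ : y ∈ lamBox l) :
    σ x * σ y = -1 := by
  have hxε := hC.spin_eq_of_mem_nbrs hfill hx hy hyΘ
  have hyε := hC.spin_ne_of_mem_nbrs hfill hx hy hyΘ hyΛ
  rcases hε with rfl | rfl <;> rcases hσ y hyΛ with h | h <;> simp_all

lemma interaction_sub_interaction_flipC (hσ : ∀ x ∈ lamBox l, σ x = 1 ∨ σ x = -1)
    (hε : ε = 1 ∨ ε = -1) (hC : IsCluster l σ ε C) (hfill : (↑Θ : Set Site) = fill C)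
    (hΘ : Θ ⊆ lamBox l) :
    ∑ x ∈ lamBox l, ∑ y ∈ (nbrs x).filter (· ∈ lamBox l), ((σ x * σ y : ℤ) : ℝ)
      - ∑ x ∈ lamBox l, ∑ y ∈ (nbrs x).filter (· ∈ lamBox l),
          ((flipC Θ σ x * flipC Θ σ y : ℤ) : ℝ)
      = -4 * ((contourOf Θ \ boxBdry l).card : ℝ) := by
  classical
  set cross : Site × Site → ℝ := fun p => if p.1 ∈ Θ ∧ p.2 ∉ Θ then 1 else 0
  have hpair : ∀ p ∈ boxPairs l, ((σ p.1 * σ p.2 : ℤ) : ℝ)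
      - ((flipC Θ σ p.1 * flipC Θ σ p.2 : ℤ) : ℝ) = -2 * cross p - 2 * cross p.swap := by
    rintro ⟨x, y⟩ hp
    simp only [boxPairs, Finset.mem_filter, Finset.mem_product] at hp
    obtain ⟨⟨hx, hy⟩, hxy⟩ := hp
    by_cases hxΘ : x ∈ Θ <;> by_cases hyΘ : y ∈ Θ
    · simp [cross, flipC, hxΘ, hyΘ]
    · have h := spin_mul_spin_eq_neg_one hσ hε hC hfill hxΘ hxy hyΘ hy
      simp [cross, flipC, hxΘ, hyΘ]
      exact_mod_cast (by linarith : σ x * σ y + σ x * σ y = -2)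
    · have h := spin_mul_spin_eq_neg_one hσ hε hC hfill hyΘ (nbrs_symm hxy) hxΘ hx
      simp [cross, flipC, hxΘ, hyΘ]
      exact_mod_cast (by linarith : σ x * σ y + σ x * σ y = -2)
    · simp [cross, flipC, hxΘ, hyΘ]
  rw [sum_sum_nbrs_lamBox_eq_sum_boxPairs, sum_sum_nbrs_lamBox_eq_sum_boxPairs,
    ← Finset.sum_sub_distrib, Finset.sum_congr rfl hpair, Finset.sum_sub_distrib,
    ← Finset.mul_sum, ← Finset.mul_sum, sum_boxPairs_swap cross, Finset.sum_boole,
    card_boxPairs_filter_eq_card_contourOf_sdiff hΘ]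
  ring

lemma field_sub_field_flipC (hC : IsCluster l σ ε C) (hfill : (↑Θ : Set Site) = fill C)
    (hΘ : Θ ⊆ lamBox l) (ω : Site → ℝ) :
    ∑ x ∈ lamBox l, ∑ y ∈ (nbrs x).filter (· ∉ lamBox l), (σ x : ℝ) * ω y
      - ∑ x ∈ lamBox l, ∑ y ∈ (nbrs x).filter (· ∉ lamBox l), ((flipC Θ σ x : ℤ) : ℝ) * ω y
      = 2 * ε * ∑ y ∈ Vex l (contourOf Θ), ω y := by
  classical
  rw [sum_Vex, Finset.mul_sum, ← Finset.sum_sub_distrib]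
  refine Finset.sum_congr rfl fun x _ => ?_
  rw [← Finset.sum_sub_distrib, Finset.mul_sum, ← Finset.filter_filter,
    Finset.sum_filter (p := fun y => dualBond x y ∈ contourOf Θ)]
  refine Finset.sum_congr rfl fun y hy => ?_
  obtain ⟨hxy, hyΛ⟩ := Finset.mem_filter.1 hy
  have hyΘ : y ∉ Θ := fun h => hyΛ (hΘ h)
  by_cases hxΘ : x ∈ Θ
  · rw [if_pos ((dualBond_mem_contourOf_iff hxy).2 (Or.inl ⟨hxΘ, hyΘ⟩)), flipC, if_pos hxΘ,
      hC.spin_eq_of_mem_nbrs hfill hxΘ hxy hyΘ]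
    push_cast; ring
  · rw [if_neg (by rw [dualBond_mem_contourOf_iff hxy]; tauto), flipC, if_neg hxΘ, sub_self]

lemma half_dH_eq (hσ : ∀ x ∈ lamBox l, σ x = 1 ∨ σ x = -1) (hε : ε = 1 ∨ ε = -1)
    (ω : Site → ℝ) (hC : IsCluster l σ ε C) (hfill : (↑Θ : Set Site) = fill C)
    (hΘ : Θ ⊆ lamBox l) :
    (1 / 2 : ℝ) * dH l ω [Θ] σ
      = (contourOf Θ \ boxBdry l).card - ε * ∑ y ∈ Vex l (contourOf Θ), ω y := by
  have hJ := interaction_sub_interaction_flipC hσ hε hC hfill hΘ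
  have hh := field_sub_field_flipC hC hfill hΘ ω
  simp only [dH, List.foldr, Ham]
  linarith

end Energy

section Scan

lemma exists_last_not_of_le {P : ℤ → Prop} {a b : ℤ} (hab : a ≤ b) (ha : ¬ P a) (hb : P b) :
    ∃ k, a ≤ k ∧ k < b ∧ ¬ P k ∧ ∀ c, k < c → c ≤ b → P c := by
  obtain ⟨k, ⟨hkb, hk⟩, hmax⟩ := Int.exists_greatest_of_bdd (P := fun c => c ≤ b ∧ ¬ P c)
    ⟨b, fun _ h => h.1⟩ ⟨a, hab, ha⟩
  refine ⟨k, hmax a ⟨hab, ha⟩, lt_of_le_of_ne hkb (by rintro rfl; exact hk hb), hk,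
    fun c hkc hcb => ?_⟩
  by_contra hc
  exact absurd (hmax c ⟨hcb, hc⟩) (not_le.2 hkc)

variable {l : ℕ} {Θ Θt : Finset Site} {γu : Finset DBond}

/-- A nearest-neighbour path `φ` in `Λ(l)` entering `Θ̃` crosses `γ̲ = ∂Q(Θ̃) ∩ Λ(l)`; if it ends
outside `Θ ⊆ Θ̃`, it also crosses a bond of `γ \ (∂Q(Λ(l)) ∪ γ̲)` after its last entrance. -/
lemma exists_dualBond_mem_of_path (hib : interiorBdry l Θt = γu)
    (hγu : γu ⊆ contourOf Θ \ boxBdry l) (hΘ : Θ ⊆ Θt) {Q : DBond → Prop}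
    (φ : ℤ → Site) (hφ : ∀ c, φ (c + 1) ∈ nbrs (φ c)) (hQ : ∀ c, Q (dualBond (φ c) (φ (c + 1))))
    {a b : ℤ} (hab : a ≤ b) (hbox : ∀ c, a ≤ c → c ≤ b → φ c ∈ lamBox l)
    (ha : φ a ∉ Θt) (hb : φ b ∈ Θt) :
    (∃ e ∈ γu, Q e) ∧ (φ b ∉ Θ → ∃ e ∈ (contourOf Θ \ boxBdry l) \ γu, Q e) := by
  obtain ⟨k, hak, hkb, hk, hlast⟩ := exists_last_not_of_le (P := fun c => φ c ∈ Θt) hab ha hb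
  have hk1 : φ (k + 1) ∈ Θt := hlast _ (by omega) (by omega)
  have hkγ : dualBond (φ k) (φ (k + 1)) ∈ γu :=
    hib ▸ (dualBond_mem_interiorBdry_iff (hφ k)).2 (Or.inr ⟨hk1, hbox k hak hkb.le, hk⟩)
  refine ⟨⟨_, hkγ, hQ k⟩, fun hbΘ => ?_⟩
  have hk1Θ : φ (k + 1) ∈ Θ := by
    have := (dualBond_mem_contourOf_iff (hφ k)).1 (Finset.mem_sdiff.1 (hγu hkγ)).1
    exact (this.resolve_left fun h => hk (hΘ h.1)).1
  obtain ⟨m, hkm, hmb, hm, hmlast⟩ :=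
    exists_last_not_of_le (P := fun c => φ c ∉ Θ) (by omega : k + 1 ≤ b) (not_not.2 hk1Θ) hbΘ
  rw [not_not] at hm
  have hm1 : φ (m + 1) ∉ Θ := hmlast _ (by omega) (by omega)
  have hm1Λ : φ (m + 1) ∈ lamBox l := hbox _ (by omega) (by omega)
  refine ⟨_, Finset.mem_sdiff.2 ⟨Finset.mem_sdiff.2 ⟨?_, ?_⟩, ?_⟩, hQ m⟩
  · exact (dualBond_mem_contourOf_iff (hφ m)).2 (Or.inl ⟨hm, hm1⟩)
  · rw [dualBond_mem_boxBdry_iff (hφ m) (hbox m (by omega) (by omega))]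
    exact not_not.2 hm1Λ
  · rw [← hib, dualBond_mem_interiorBdry_iff (hφ m)]
    have := hlast (m + 1) (by omega) (by omega)
    have := hΘ hm
    tauto

end Scan

section LineDualBond

def IsRowDualBond (t : ℤ) (e : DBond) : Prop := ∃ k, e = s((k, t - 1), (k, t))

def IsColDualBond (c : ℤ) (e : DBond) : Prop := ∃ k, e = s((c - 1, k), (c, k))

lemma isRowDualBond_dualBond {x y : Site} (h : x.2 = y.2) : IsRowDualBond x.2 (dualBond x y) :=
  ⟨_, if_pos h⟩

lemma isColDualBond_dualBond {x y : Site} (h : x.2 ≠ y.2) : IsColDualBond x.1 (dualBond x y) :=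
  ⟨_, if_neg h⟩

/-- If the vertical side `F_l^i` and the horizontal side `F_l^j` are free of `Θ̃`, every site of
`V_ex(γ̄)` lies in the exterior column `extCol l i` or the exterior row `extRow l j`. -/
def extCol (l : ℕ) (i : ℤ) : ℤ := if i = 1 then lamLo l - 1 else lamHi l + 1

def extRow (l : ℕ) (j : ℤ) : ℤ := if j = 2 then lamLo l - 1 else lamHi l + 1

/-- `e` crosses the lattice line through the exterior site `y` perpendicular to its side. -/
def LineDualBond (l : ℕ) (i j : ℤ) (y : Site) (e : DBond) : Prop :=
  (y.1 = extCol l i ∧ IsRowDualBond y.2 e) ∨ (y.2 = extRow l j ∧ IsColDualBond y.1 e)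

lemma LineDualBond.left_unique {l : ℕ} {i j : ℤ} {y y' : Site} {e : DBond}
    (h : LineDualBond l i j y e) (h' : LineDualBond l i j y' e) : y = y' := by
  obtain ⟨y1, y2⟩ := y; obtain ⟨y1', y2'⟩ := y'
  rcases h with ⟨h1, k, rfl⟩ | ⟨h1, k, rfl⟩ <;>
    rcases h' with ⟨h1', k', he⟩ | ⟨h1', k', he⟩ <;>
    simp only [Sym2.eq_iff, Prod.mk.injEq] at he h1 h1' ⊢ <;> omega

lemma card_le_card_of_lineDualBond {l : ℕ} {i j : ℤ} {A : Finset Site} {B : Finset DBond}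
    (h : ∀ y ∈ A, ∃ e ∈ B, LineDualBond l i j y e) : A.card ≤ B.card :=
  Finset.card_le_card_of_forall_subsingleton _ h fun _ _ _ hy _ hy' => hy.2.left_unique hy'.2

end LineDualBond

section Geometry

variable {l : ℕ} {Θ Θt : Finset Site} {γu : Finset DBond} {i j : ℤ}

lemma exists_lineDualBond_of_horizontal (hib : interiorBdry l Θt = γu)
    (hγu : γu ⊆ contourOf Θ \ boxBdry l) (hΘ : Θ ⊆ Θt) (hi : i = 1 ∨ i = -1)
    (hmi : ∀ x, sideSites l i x → x ∉ Θt) {x y : Site} (hx : x ∈ lamBox l) (hxΘt : x ∈ Θt)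
    (hy : y ∉ lamBox l) (hxy : y = (x.1 + 1, x.2) ∨ y = (x.1 - 1, x.2)) :
    (∃ e ∈ γu, LineDualBond l i j y e) ∧
      (x ∉ Θ → ∃ e ∈ (contourOf Θ \ boxBdry l) \ γu, LineDualBond l i j y e) := by
  obtain ⟨x1, x2⟩ := x
  have hxb := mem_lamBox.1 hx
  rw [mem_lamBox] at hy
  rcases hxy with rfl | rfl
  · have hx1 : x1 = lamHi l := by simp only at hxb hy ⊢; omega
    obtain rfl : i = -1 :=
      hi.resolve_left (by rintro rfl; exact hmi _ ⟨hx, Or.inl ⟨rfl, hx1⟩⟩ hxΘt)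
    exact exists_dualBond_mem_of_path hib hγu hΘ (fun c => (c, x2)) (by simp [mem_nbrs_iff])
      (fun c => Or.inl ⟨by simp [extCol, hx1], isRowDualBond_dualBond rfl⟩) (a := lamLo l)
      (by simp only at hxb; omega) (fun c h1 h2 => mem_lamBox.2 (by simp only at hxb ⊢; omega))
      (hmi _ ⟨mem_lamBox.2 (by simp only at hxb ⊢; omega), Or.inr (Or.inl ⟨rfl, rfl⟩)⟩) hxΘt
  · have hx1 : x1 = lamLo l := by simp only at hxb hy ⊢; omega
    obtain rfl : i = 1 :=
      hi.resolve_right (by rintro rfl; exact hmi _ ⟨hx, Or.inr (Or.inl ⟨rfl, hx1⟩)⟩ hxΘt)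
    simpa only [neg_neg] using exists_dualBond_mem_of_path hib hγu hΘ (fun c => (-c, x2))
      (fun c => by simp [mem_nbrs_iff]; omega)
      (fun c => Or.inl ⟨by simp [extCol, hx1], isRowDualBond_dualBond rfl⟩) (a := -lamHi l)
      (b := -x1) (by simp only at hxb; omega)
      (fun c h1 h2 => mem_lamBox.2 (by simp only at hxb ⊢; omega))
      (by simpa using hmi _ ⟨mem_lamBox.2 (by simp only at hxb ⊢; omega), Or.inl ⟨rfl, rfl⟩⟩)
      (by simpa using hxΘt)

lemma exists_lineDualBond_of_vertical (hib : interiorBdry l Θt = γu)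
    (hγu : γu ⊆ contourOf Θ \ boxBdry l) (hΘ : Θ ⊆ Θt) (hj : j = 2 ∨ j = -2)
    (hmj : ∀ x, sideSites l j x → x ∉ Θt) {x y : Site} (hx : x ∈ lamBox l) (hxΘt : x ∈ Θt)
    (hy : y ∉ lamBox l) (hxy : y = (x.1, x.2 + 1) ∨ y = (x.1, x.2 - 1)) :
    (∃ e ∈ γu, LineDualBond l i j y e) ∧
      (x ∉ Θ → ∃ e ∈ (contourOf Θ \ boxBdry l) \ γu, LineDualBond l i j y e) := by
  obtain ⟨x1, x2⟩ := x
  have hxb := mem_lamBox.1 hx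
  rw [mem_lamBox] at hy
  rcases hxy with rfl | rfl
  · have hx2 : x2 = lamHi l := by simp only at hxb hy ⊢; omega
    obtain rfl : j = -2 :=
      hj.resolve_left (by rintro rfl; exact hmj _ ⟨hx, Or.inr (Or.inr (Or.inl ⟨rfl, hx2⟩))⟩ hxΘt)
    exact exists_dualBond_mem_of_path hib hγu hΘ (fun c => (x1, c)) (by simp [mem_nbrs_iff])
      (fun c => Or.inr ⟨by simp [extRow, hx2], isColDualBond_dualBond (by simp)⟩)
      (a := lamLo l) (by simp only at hxb; omega)
      (fun c h1 h2 => mem_lamBox.2 (by simp only at hxb ⊢; omega))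
      (hmj _ ⟨mem_lamBox.2 (by simp only at hxb ⊢; omega), Or.inr (Or.inr (Or.inr ⟨rfl, rfl⟩))⟩)
      hxΘt
  · have hx2 : x2 = lamLo l := by simp only at hxb hy ⊢; omega
    obtain rfl : j = 2 :=
      hj.resolve_right (by rintro rfl; exact hmj _ ⟨hx, Or.inr (Or.inr (Or.inr ⟨rfl, hx2⟩))⟩ hxΘt)
    simpa only [neg_neg] using exists_dualBond_mem_of_path hib hγu hΘ (fun c => (x1, -c))
      (fun c => by simp [mem_nbrs_iff]; omega)
      (fun c => Or.inr ⟨by simp [extRow, hx2], isColDualBond_dualBond (by simp)⟩)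
      (a := -lamHi l) (b := -x2) (by simp only at hxb; omega)
      (fun c h1 h2 => mem_lamBox.2 (by simp only at hxb ⊢; omega))
      (by simpa using
        hmj _ ⟨mem_lamBox.2 (by simp only at hxb ⊢; omega), Or.inr (Or.inr (Or.inl ⟨rfl, rfl⟩))⟩)
      (by simpa using hxΘt)

lemma exists_lineDualBond_of_mem_nbrs (hib : interiorBdry l Θt = γu)
    (hγu : γu ⊆ contourOf Θ \ boxBdry l) (hΘ : Θ ⊆ Θt) (hi : i = 1 ∨ i = -1)
    (hj : j = 2 ∨ j = -2) (hmi : ∀ x, sideSites l i x → x ∉ Θt)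
    (hmj : ∀ x, sideSites l j x → x ∉ Θt) {x y : Site} (hx : x ∈ lamBox l) (hxΘt : x ∈ Θt)
    (hy : y ∉ lamBox l) (hxy : y ∈ nbrs x) :
    (∃ e ∈ γu, LineDualBond l i j y e) ∧
      (x ∉ Θ → ∃ e ∈ (contourOf Θ \ boxBdry l) \ γu, LineDualBond l i j y e) := by
  rcases mem_nbrs_iff.1 hxy with h | h | h | h
  · exact exists_lineDualBond_of_horizontal hib hγu hΘ hi hmi hx hxΘt hy (Or.inl h)
  · exact exists_lineDualBond_of_horizontal hib hγu hΘ hi hmi hx hxΘt hy (Or.inr h)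
  · exact exists_lineDualBond_of_vertical hib hγu hΘ hj hmj hx hxΘt hy (Or.inl h)
  · exact exists_lineDualBond_of_vertical hib hγu hΘ hj hmj hx hxΘt hy (Or.inr h)

end Geometry

section Counting

variable {l : ℕ} {Θ Θt : Finset Site} {γu : Finset DBond}

lemma exists_mem_of_mem_Vex_gammaBar (hΘt : Θt ⊆ lamBox l) {y : Site}
    (hy : y ∈ Vex l (gammaBar l Θt)) :
    ∃ x ∈ lamBox l, y ∈ nbrs x ∧ y ∉ lamBox l ∧ x ∈ Θt := by
  obtain ⟨x, hx, hxy, hyΛ, he⟩ := mem_Vex.1 hy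
  have := (dualBond_mem_contourOf_iff hxy).1 (Finset.mem_inter.1 he).2
  exact ⟨x, hx, hxy, hyΛ, (this.resolve_right fun h => hyΛ (hΘt h.1)).1⟩

lemma Vex_contourOf_subset_Vex_gammaBar (hΘ : Θ ⊆ Θt) (hΘt : Θt ⊆ lamBox l) :
    Vex l (contourOf Θ) ⊆ Vex l (gammaBar l Θt) := by
  intro y hy
  obtain ⟨x, hx, hxy, hyΛ, he⟩ := mem_Vex.1 hy
  have hxΘ : x ∈ Θ :=
    (((dualBond_mem_contourOf_iff hxy).1 he).resolve_right fun h => hyΛ (hΘt (hΘ h.1))).1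
  refine mem_Vex.2 ⟨x, hx, hxy, hyΛ, Finset.mem_inter.2 ⟨?_, ?_⟩⟩
  · exact (dualBond_mem_boxBdry_iff hxy hx).2 hyΛ
  · exact (dualBond_mem_contourOf_iff hxy).2 (Or.inl ⟨hΘ hxΘ, fun h => hyΛ (hΘt h)⟩)

lemma card_Vex_gammaBar_le (hu : UnderlineData l Θ γu Θt) :
    (Vex l (gammaBar l Θt)).card ≤ γu.card := by
  obtain ⟨hγu, -, -, hΘ, hΘt, -, -, hib, i, j, hi, hj, -, -, hmi, hmj⟩ := hu
  refine card_le_card_of_lineDualBond (l := l) (i := i) (j := j) fun y hy => ?_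
  obtain ⟨x, hx, hxy, hyΛ, hxΘt⟩ := exists_mem_of_mem_Vex_gammaBar hΘt hy
  exact (exists_lineDualBond_of_mem_nbrs hib hγu hΘ hi hj hmi hmj hx hxΘt hyΛ hxy).1

lemma card_Vex_gammaBar_sdiff_le (hu : UnderlineData l Θ γu Θt) :
    (Vex l (gammaBar l Θt) \ Vex l (contourOf Θ)).card
      ≤ ((contourOf Θ \ boxBdry l) \ γu).card := by
  obtain ⟨hγu, -, -, hΘ, hΘt, -, -, hib, i, j, hi, hj, -, -, hmi, hmj⟩ := hu
  refine card_le_card_of_lineDualBond (l := l) (i := i) (j := j) fun y hy => ?_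
  obtain ⟨hy, hyW⟩ := Finset.mem_sdiff.1 hy
  obtain ⟨x, hx, hxy, hyΛ, hxΘt⟩ := exists_mem_of_mem_Vex_gammaBar hΘt hy
  refine (exists_lineDualBond_of_mem_nbrs hib hγu hΘ hi hj hmi hmj hx hxΘt hyΛ hxy).2
    fun hxΘ => hyW (mem_Vex.2 ⟨x, hx, hxy, hyΛ, ?_⟩)
  exact (dualBond_mem_contourOf_iff hxy).2 (Or.inl ⟨hxΘ, fun h => hyΛ (hΘt (hΘ h))⟩)

end Counting

lemma abs_intCast_mul_sum_le_card {α : Type*} {ε : ℤ} (hε : ε = 1 ∨ ε = -1) {s : Finset α}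
    {ω : α → ℝ} (hω : ∀ y ∈ s, |ω y| ≤ 1) : |(ε : ℝ) * ∑ y ∈ s, ω y| ≤ s.card := by
  have hε' : |(ε : ℝ)| = 1 := by rcases hε with rfl | rfl <;> simp
  rw [abs_mul, hε', one_mul]
  exact (Finset.abs_sum_le_sum_abs _ _).trans (by simpa using Finset.sum_le_card_nsmul s _ 1 hω)

theorem stmt5_general (l : ℕ) (σ : Site → ℤ) (hσ : ∀ x ∈ lamBox l, σ x = 1 ∨ σ x = -1)
    (ε : ℤ) (hε : ε = 1 ∨ ε = -1) (ω : Site → ℝ)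
    (hω : ∀ y ∈ extBdry l, |ω y| ≤ 1)
    (Θ : Finset Site) (hc : IsEContour l σ ε Θ)
    (γu : Finset DBond) (Θt : Finset Site)
    (hu : UnderlineData l Θ γu Θt) :
    (1/2 : ℝ) * dH l ω [Θ] σ ≥
        (γu.card : ℝ) - (ε : ℝ) * ∑ y ∈ Vex l (gammaBar l Θt), ω y ∧
      (γu.card : ℝ) - (ε : ℝ) * ∑ y ∈ Vex l (gammaBar l Θt), ω y ≥
        (γu.card : ℝ) - ((Vex l (gammaBar l Θt)).card : ℝ) ∧
      (γu.card : ℝ) - ((Vex l (gammaBar l Θt)).card : ℝ) ≥ 0 := by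
  obtain ⟨C, hC, hfill⟩ := hc
  have ⟨hγu, _, _, hΘ, hΘt, _⟩ := hu
  set V := Vex l (gammaBar l Θt)
  set W := Vex l (contourOf Θ)
  have hωV : ∀ y ∈ V, |ω y| ≤ 1 := fun y hy => hω y (Vex_subset_extBdry l _ hy)
  have hγ : ((contourOf Θ \ boxBdry l).card : ℝ)
      = ((contourOf Θ \ boxBdry l) \ γu).card + γu.card := by
    exact_mod_cast (Finset.card_sdiff_add_card_eq_card hγu).symm
  have hVW : ((V \ W).card : ℝ) ≤ ((contourOf Θ \ boxBdry l) \ γu).card := by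
    exact_mod_cast card_Vex_gammaBar_sdiff_le hu
  have hV : (V.card : ℝ) ≤ γu.card := by exact_mod_cast card_Vex_gammaBar_le hu
  have hsumVW :=
    abs_intCast_mul_sum_le_card (s := V \ W) hε fun y hy => hωV y (Finset.mem_sdiff.1 hy).1
  rw [Finset.sum_sdiff_eq_sub (Vex_contourOf_subset_Vex_gammaBar hΘ hΘt), mul_sub] at hsumVW
  have hsumV := abs_intCast_mul_sum_le_card hε hωV
  rw [half_dH_eq hσ hε ω hC hfill (hΘ.trans hΘt)]
  refine ⟨?_, ?_, ?_⟩
  · linarith [neg_abs_le ((ε : ℝ) * ∑ y ∈ V, ω y - ε * ∑ y ∈ W, ω y)]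
  · linarith [le_abs_self ((ε : ℝ) * ∑ y ∈ V, ω y)]
  · linarith

/-- For a non-crossing (ε)-contour `γ` at `σ` in `Λ(l)`:
`(1/2)Δ_γ H^ω(σ) ≥ |γ̲| - ε ∑_{y∈V_ex(γ̄)} ω_y ≥ |γ̲| - |I(γ)| ≥ 0`, where
`γ̄ = ∂Q(Λ(l)) ∩ ∂Q(Θ̃)` and `I(γ) = V_ex(γ̄)`. -/
theorem stmt5 (l : ℕ) (σ : Site → ℤ) (hσ : ∀ x ∈ lamBox l, σ x = 1 ∨ σ x = -1)
    (ε : ℤ) (hε : ε = 1 ∨ ε = -1) (ω : Site → ℝ)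
    (hω : ∀ y ∈ extBdry l, |ω y| ≤ 1)
    (Θ : Finset Site) (hc : IsEContour l σ ε Θ)
    (hnc : NonCrossing l (contourOf Θ)) (γu : Finset DBond) (Θt : Finset Site)
    (hu : UnderlineData l Θ γu Θt) :
    (1/2 : ℝ) * dH l ω [Θ] σ ≥
        (γu.card : ℝ) - (ε : ℝ) * ∑ y ∈ Vex l (gammaBar l Θt), ω y ∧
      (γu.card : ℝ) - (ε : ℝ) * ∑ y ∈ Vex l (gammaBar l Θt), ω y ≥
        (γu.card : ℝ) - ((Vex l (gammaBar l Θt)).card : ℝ) ∧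
      (γu.card : ℝ) - ((Vex l (gammaBar l Θt)).card : ℝ) ≥ 0 :=
  stmt5_general l σ hσ ε hε ω hω Θ hc γu Θt hu
end

section
/- Suppose γ_1,…,γ_p are (ε)-contours in Λ(l) at σ such that (1/2)Δ_{γ_1,…,γ_p} H^ω_{Λ(l)}(σ) ≥ c₁l − c₂ for constants c₁, c₂ ≥ 0. Then (1/2)Δ_{γ_1,…,γ_p} H^ω_{Λ(l)}(σ) ≥ (c₁/(c₁+8)) ∑_{j=1}^p |γ_j| − c₂. -/
open Finset

lemma card_Icc_lamLo_lamHi_le (l : ℕ) : #(Icc (lamLo l) (lamHi l)) ≤ l := by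
  rw [Int.card_Icc, lamLo, lamHi]
  omega

lemma mem_nbrs_comm {x y : Site} : y ∈ nbrs x ↔ x ∈ nbrs y := by
  simp only [nbrs, mem_insert, mem_singleton, Prod.ext_iff]
  omega

lemma d1_comm (x y : Site) : d1 x y = d1 y x := by
  simp [d1, abs_sub_comm]

lemma nbrs_eq_image (x : Site) : nbrs x = (nbrs 0).image (x + ·) := by
  obtain ⟨a, b⟩ := x
  simp [nbrs, Finset.image_insert, sub_eq_add_neg]

lemma sum_nbrs_comm {M : Type*} [AddCommMonoid M] (B : Finset Site) (f : Site → Site → M) :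
    ∑ x ∈ B, ∑ y ∈ nbrs x with y ∈ B, f x y = ∑ x ∈ B, ∑ y ∈ nbrs x with y ∈ B, f y x :=
  sum_comm' fun x y => by simp only [mem_filter, mem_nbrs_comm (x := x)]; tauto

lemma card_filter_add_notMem_lamBox_le (l : ℕ) {u : Site} (hu : u ∈ nbrs 0) :
    #{x ∈ lamBox l | x + u ∉ lamBox l} ≤ l := by
  -- a site leaving the box in direction `u` is determined by its coordinate across `u`
  refine (card_le_card_of_injOn (fun x => x.1 * |u.2| + x.2 * |u.1|) ?_ ?_).trans
    (card_Icc_lamLo_lamHi_le l)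
  all_goals
    simp only [nbrs, mem_insert, mem_singleton] at hu
    rcases hu with rfl | rfl | rfl | rfl <;>
      simp [Set.MapsTo, Set.InjOn, mem_lamBox, Prod.ext_iff] <;> omega

lemma sum_card_nbrs_notMem_lamBox_le (l : ℕ) :
    ∑ x ∈ lamBox l, #{y ∈ nbrs x | y ∉ lamBox l} ≤ 4 * l :=
  calc ∑ x ∈ lamBox l, #{y ∈ nbrs x | y ∉ lamBox l}
      = ∑ u ∈ nbrs 0, #{x ∈ lamBox l | x + u ∉ lamBox l} := by
        simp only [card_filter]
        rw [sum_comm]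
        refine sum_congr rfl fun x _ => ?_
        rw [nbrs_eq_image, sum_image fun _ _ _ _ h => add_left_cancel h]
    _ ≤ ∑ _u ∈ nbrs 0, l := sum_le_sum fun u hu => card_filter_add_notMem_lamBox_le l hu
    _ = 4 * l := by rw [sum_const, show #(nbrs 0) = 4 from rfl, smul_eq_mul]

section Chains

variable {d : Site → Site → ℤ} {S : Set Site} {x y z : Site}

lemma chainIn_refl (hx : x ∈ S) : ChainIn d S x x :=
  ⟨[x], List.isChain_singleton x, rfl, rfl, by simpa using hx⟩

lemma chainIn_of_eq_one (hx : x ∈ S) (hy : y ∈ S) (hxy : d x y = 1) : ChainIn d S x y :=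
  ⟨[x, y], List.isChain_pair.2 hxy, rfl, rfl, by simp [hx, hy]⟩

lemma ChainIn.trans (h₁ : ChainIn d S x y) (h₂ : ChainIn d S y z) : ChainIn d S x z := by
  obtain ⟨L₁, hc₁, hh₁, hl₁, hm₁⟩ := h₁
  obtain ⟨_ | ⟨b, L₂⟩, hc₂, hh₂, hl₂, hm₂⟩ := h₂
  · simp at hh₂
  obtain rfl : b = y := by simpa using hh₂
  refine ⟨L₁ ++ L₂, ?_, ?_, ?_, ?_⟩
  · refine List.isChain_append.2 ⟨hc₁, (List.isChain_cons.1 hc₂).2, fun a ha c hc => ?_⟩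
    obtain rfl : a = b := by simpa [hl₁] using ha.symm
    exact (List.isChain_cons.1 hc₂).1 c hc
  · rcases L₁ with _ | ⟨a, L₁⟩ <;> simp_all
  · rcases L₂ with _ | ⟨c, L₂⟩ <;> simp_all [List.getLast?_append]
  · intro a ha
    rcases List.mem_append.1 ha with h | h
    exacts [hm₁ a h, hm₂ a (List.mem_cons_of_mem b h)]

end Chains

section Components

variable {S : Set Site} {C : Finset Site} {x y : Site}

lemma l1Comp_eq_of_d1_eq_one (hx : x ∈ S) (hy : y ∈ S) (h : d1 x y = 1) :
    l1Comp S x = l1Comp S y := by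
  ext z
  exact ⟨(chainIn_of_eq_one hy hx (d1_comm x y ▸ h)).trans, (chainIn_of_eq_one hx hy h).trans⟩

lemma l1Comp_infinite_of_ray {u : Site} (hu : d1 0 u = 1)
    (hray : ∀ n : ℕ, x + (n : ℤ) • u ∈ S) : (l1Comp S x).Infinite := by
  have hmem : ∀ n : ℕ, x + (n : ℤ) • u ∈ l1Comp S x := by
    intro n
    induction n with
    | zero => simpa [l1Comp] using chainIn_refl (d := d1) (by simpa using hray 0)
    | succ n ih =>
      refine ih.trans (chainIn_of_eq_one (hray n) (hray (n + 1)) ?_)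
      rw [Nat.cast_succ, add_smul, one_smul, ← add_assoc]
      simpa [d1] using hu
  have hu0 : u ≠ 0 := by rintro rfl; simp [d1] at hu
  exact Set.infinite_of_injective_forall_mem
    ((add_right_injective x).comp ((smul_left_injective ℤ hu0).comp Nat.cast_injective)) hmem

lemma l1Comp_compl_infinite_of_notMem_lamBox {l : ℕ} (hC : C ⊆ lamBox l)
    (hx : x ∉ lamBox l) : (l1Comp (↑C)ᶜ x).Infinite := by
  rw [mem_lamBox] at hx
  have hray : ∀ u : Site, d1 0 u = 1 → (∀ n : ℕ, x + (n : ℤ) • u ∉ lamBox l) →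
      (l1Comp (↑C)ᶜ x).Infinite := fun u hu h =>
    l1Comp_infinite_of_ray hu fun n hn => h n (hC hn)
  by_cases h₁ : x.1 < lamLo l
  · exact hray (-1, 0) (by simp [d1]) fun n hn => by simp [mem_lamBox] at hn; omega
  by_cases h₂ : lamHi l < x.1
  · exact hray (1, 0) (by simp [d1]) fun n hn => by simp [mem_lamBox] at hn; omega
  by_cases h₃ : x.2 < lamLo l
  · exact hray (0, -1) (by simp [d1]) fun n hn => by simp [mem_lamBox] at hn; omega
  · exact hray (0, 1) (by simp [d1]) fun n hn => by simp [mem_lamBox] at hn; omega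

lemma mem_of_mem_fill_of_notMem_fill (hx : x ∈ fill C)
    (hy : y ∉ fill C) (hxy : d1 x y = 1) : x ∈ C := by
  by_contra hxC
  have hyC : y ∉ C := fun h => hy (Or.inl h)
  rcases hx with hx | hx
  · exact hxC hx
  · have hy' : (l1Comp (↑C)ᶜ y).Finite := by
      rwa [← l1Comp_eq_of_d1_eq_one (S := (↑C)ᶜ) hxC hyC hxy]
    exact hy (Or.inr hy')

end Components

section Clusters

variable {l : ℕ} {σ : Site → ℤ} {ε : ℤ} {C C' Θ Θ' : Finset Site} {x y : Site}

lemma IsCluster.subset_lamBox (h : IsCluster l σ ε C) : C ⊆ lamBox l :=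
  fun x hx => (h.2.1 x hx).1

lemma IsCluster.subset_of_mem (h : IsCluster l σ ε C) (h' : IsCluster l σ ε C')
    (hx : x ∈ C) (hx' : x ∈ C') : C ⊆ C' := by
  intro z hz
  obtain ⟨L, hL, hhead, hlast, hmem⟩ := h.2.2.1 x hx z hz
  have hL' : L.IsChain fun a b => d1 a b = 1 ∧ b ∈ C :=
    List.IsChain.imp_of_mem_imp (fun a b _ hb hab => ⟨hab, hmem b hb⟩) hL
  refine hL'.induction (· ∈ C') L ?_ ?_ z (List.mem_of_getLast? hlast)
  · rintro a b ⟨hab, hb⟩ ha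
    exact h'.2.2.2 b (h.2.1 b hb).1 (h.2.1 b hb).2 ⟨a, ha, hab⟩
  · intro hne
    rw [List.head?_eq_some_head hne, Option.some_inj] at hhead
    rwa [hhead]

lemma IsCluster.eq_of_mem (h : IsCluster l σ ε C) (h' : IsCluster l σ ε C')
    (hx : x ∈ C) (hx' : x ∈ C') : C = C' :=
  (h.subset_of_mem h' hx hx').antisymm (h'.subset_of_mem h hx' hx)

lemma IsCluster.fill_subset_lamBox (h : IsCluster l σ ε C) : fill C ⊆ lamBox l := by
  intro x hx
  by_contra hxB
  rcases hx with hx | hx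
  · exact hxB (h.subset_lamBox hx)
  · exact l1Comp_compl_infinite_of_notMem_lamBox h.subset_lamBox hxB hx

lemma IsEContour.subset_lamBox (h : IsEContour l σ ε Θ) : Θ ⊆ lamBox l := by
  obtain ⟨C, hC, hΘ⟩ := h
  intro x hx
  exact hC.fill_subset_lamBox (hΘ ▸ hx)

lemma IsEContour.exists_cluster_mem (h : IsEContour l σ ε Θ) (hx : x ∈ Θ) (hy : y ∉ Θ)
    (hxy : y ∈ nbrs x) : ∃ C, IsCluster l σ ε C ∧ (↑Θ : Set Site) = fill C ∧ x ∈ C := by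
  obtain ⟨C, hC, hΘ⟩ := h
  refine ⟨C, hC, hΘ, mem_of_mem_fill_of_notMem_fill ?_ ?_ (d1_eq_one_of_mem_nbrs hxy)⟩
  · rw [← hΘ]; exact hx
  · rw [← hΘ]; exact hy

lemma IsEContour.spin_of_mem_of_notMem (h : IsEContour l σ ε Θ) (hx : x ∈ Θ) (hy : y ∉ Θ)
    (hxy : y ∈ nbrs x) : σ x = ε ∧ (y ∈ lamBox l → σ y ≠ ε) := by
  obtain ⟨C, hC, hΘ, hxC⟩ := h.exists_cluster_mem hx hy hxy
  refine ⟨(hC.2.1 x hxC).2, fun hyB hyε => hy ?_⟩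
  have : y ∈ fill C := Or.inl (hC.2.2.2 y hyB hyε ⟨x, hxC, d1_eq_one_of_mem_nbrs hxy⟩)
  rwa [← hΘ, Finset.mem_coe] at this

lemma IsEContour.eq_of_mem_of_notMem (h : IsEContour l σ ε Θ) (h' : IsEContour l σ ε Θ')
    {y' : Site} (hx : x ∈ Θ) (hx' : x ∈ Θ') (hy : y ∉ Θ) (hy' : y' ∉ Θ') (hxy : y ∈ nbrs x)
    (hxy' : y' ∈ nbrs x) : Θ = Θ' := by
  obtain ⟨C, hC, hΘ, hxC⟩ := h.exists_cluster_mem hx hy hxy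
  obtain ⟨C', hC', hΘ', hxC'⟩ := h'.exists_cluster_mem hx' hy' hxy'
  exact Finset.coe_injective (by rw [hΘ, hΘ', hC.eq_of_mem hC' hxC hxC'])

lemma IsEContour.spin_mul_eq_neg_one (hσ : ∀ x ∈ lamBox l, σ x = 1 ∨ σ x = -1)
    (hε : ε = 1 ∨ ε = -1) (h : IsEContour l σ ε Θ) (hx : x ∈ Θ) (hy : y ∉ Θ)
    (hyB : y ∈ lamBox l) (hxy : y ∈ nbrs x) : σ x * σ y = -1 := by
  obtain ⟨hxε, hyε⟩ := h.spin_of_mem_of_notMem hx hy hxy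
  have := hyε hyB
  rcases hσ y hyB with h | h <;> rcases hε with rfl | rfl <;> simp_all

end Clusters

section Families

variable {l : ℕ} {σ : Site → ℤ} {ε : ℤ} {p : ℕ} {Θs : Fin p → Finset Site} {x y : Site}

lemma card_filter_mem_le_one (hcs : ∀ j, IsEContour l σ ε (Θs j))
    (hinj : Function.Injective Θs) (hxy : y ∈ nbrs x) (hy : y ∉ lamBox l) :
    #{j | x ∈ Θs j} ≤ 1 := by
  refine card_le_one.2 fun j hj k hk => hinj ?_
  rw [mem_filter] at hj hk
  exact (hcs j).eq_of_mem_of_notMem (hcs k) hj.2 hk.2 (fun h => hy ((hcs j).subset_lamBox h))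
    (fun h => hy ((hcs k).subset_lamBox h)) hxy hxy

lemma card_filter_xor_le_one (hcs : ∀ j, IsEContour l σ ε (Θs j))
    (hinj : Function.Injective Θs) (hxy : y ∈ nbrs x) :
    #{j | Xor (x ∈ Θs j) (y ∈ Θs j)} ≤ 1 := by
  have hyx := mem_nbrs_comm.1 hxy
  -- regions separating `x`, `y` in opposite directions would give `y` spin `ε` and not `ε`
  refine card_le_one.2 fun j hj k hk => hinj ?_
  rw [mem_filter] at hj hk
  rcases hj.2 with ⟨hxj, hyj⟩ | ⟨hyj, hxj⟩ <;> rcases hk.2 with ⟨hxk, hyk⟩ | ⟨hyk, hxk⟩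
  · exact (hcs j).eq_of_mem_of_notMem (hcs k) hxj hxk hyj hyk hxy hxy
  · exact absurd ((hcs k).spin_of_mem_of_notMem hyk hxk hyx).1
      (((hcs j).spin_of_mem_of_notMem hxj hyj hxy).2 ((hcs k).subset_lamBox hyk))
  · exact absurd ((hcs k).spin_of_mem_of_notMem hxk hyk hxy).1
      (((hcs j).spin_of_mem_of_notMem hyj hxj hyx).2 ((hcs k).subset_lamBox hxk))
  · exact (hcs j).eq_of_mem_of_notMem (hcs k) hyj hyk hxj hxk hyx hyx

end Families

section Flips

variable {p : ℕ}

lemma foldr_flipC_ofFn_apply (Θs : Fin p → Finset Site) (σ : Site → ℤ) (x : Site) :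
    (List.ofFn Θs).foldr flipC σ x = (-1) ^ #{j | x ∈ Θs j} * σ x := by
  induction p with
  | zero => simp
  | succ p ih =>
    rw [List.ofFn_succ, List.foldr_cons, flipC, ih, Fin.card_filter_univ_succ]
    split_ifs <;> ring

lemma foldr_flipC_ofFn_mul (Θs : Fin p → Finset Site) (σ : Site → ℤ) (x y : Site) :
    (List.ofFn Θs).foldr flipC σ x * (List.ofFn Θs).foldr flipC σ y =
      (-1) ^ #{j | Xor (x ∈ Θs j) (y ∈ Θs j)} * (σ x * σ y) := by
  induction p with
  | zero => simp
  | succ p ih =>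
    rw [List.ofFn_succ, List.foldr_cons, flipC, flipC, Fin.card_filter_univ_succ]
    have ih' := ih fun i => Θs i.succ
    by_cases hx : x ∈ Θs 0 <;> by_cases hy : y ∈ Θs 0 <;>
      simp only [hx, hy, if_true, if_false, xor_true, xor_false, not_true, not_false_eq_true,
        id, pow_succ]
    · linear_combination ih'
    · linear_combination -ih'
    · linear_combination -ih'
    · exact ih'

end Flips

-- `innerBondCount l Θ + outerBondCount l Θ` counts the ordered nearest-neighbour pairs `(x, y)`
-- with `x ∈ Θ`, `y ∉ Θ`, i.e. bounds `|∂Q(Θ)|`; `outerBondCount l Θ` counts those crossing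
-- `∂Q(Λ(l))`, the paper's `|γ ∩ ∂Q(Λ(l))|`.
noncomputable def innerBondCount (l : ℕ) (Θ : Finset Site) : ℕ :=
  ∑ x ∈ Θ, #{y ∈ nbrs x | y ∈ lamBox l ∧ y ∉ Θ}

noncomputable def outerBondCount (l : ℕ) (Θ : Finset Site) : ℕ :=
  ∑ x ∈ Θ, #{y ∈ nbrs x | y ∉ lamBox l}

section Counting

variable {l : ℕ} {Θ : Finset Site}

lemma card_contourOf_le (hΘ : Θ ⊆ lamBox l) :
    #(contourOf Θ) ≤ innerBondCount l Θ + outerBondCount l Θ := by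
  refine card_biUnion_le.trans ?_
  rw [innerBondCount, outerBondCount, ← sum_add_distrib]
  refine sum_le_sum fun x _ => card_image_le.trans_eq ?_
  rw [← card_filter_add_card_filter_not (s := {y ∈ nbrs x | y ∉ Θ}) (· ∈ lamBox l),
    filter_filter, filter_filter]
  congr 2
  · ext y; simp [and_comm]
  · ext y
    simp only [mem_filter, and_iff_right_of_imp fun (h : _ ∉ lamBox l) hy => h (hΘ hy)]

lemma sum_sum_ite_xor_eq (hΘ : Θ ⊆ lamBox l) :
    ∑ x ∈ lamBox l, ∑ y ∈ nbrs x with y ∈ lamBox l, (if Xor (x ∈ Θ) (y ∈ Θ) then 1 else 0) =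
      2 * innerBondCount l Θ := by
  have hsplit : ∀ x y, (if Xor (x ∈ Θ) (y ∈ Θ) then 1 else 0) =
      (if x ∈ Θ ∧ y ∉ Θ then 1 else 0) + (if y ∈ Θ ∧ x ∉ Θ then 1 else 0) := by
    intro x y
    by_cases hx : x ∈ Θ <;> by_cases hy : y ∈ Θ <;> simp [Xor, hx, hy]
  simp only [hsplit, sum_add_distrib]
  rw [← sum_nbrs_comm (lamBox l) fun x y => if x ∈ Θ ∧ y ∉ Θ then 1 else 0, ← two_mul]
  congr 1
  calc _ = ∑ x ∈ lamBox l, if x ∈ Θ then #{y ∈ nbrs x | y ∈ lamBox l ∧ y ∉ Θ} else 0 := by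
        refine sum_congr rfl fun x _ => ?_
        split_ifs with hx
        · rw [card_filter, sum_filter]
          simp only [hx, true_and, ite_and]
        · simp [hx]
    _ = innerBondCount l Θ := by rw [sum_ite_mem, inter_eq_right.2 hΘ, innerBondCount]

lemma sum_card_filter_mem_mul {p : ℕ} {Θs : Fin p → Finset Site} {B : Finset Site}
    (hΘ : ∀ j, Θs j ⊆ B) (k : Site → ℕ) :
    ∑ x ∈ B, #{j | x ∈ Θs j} * k x = ∑ j, ∑ x ∈ Θs j, k x := by
  simp only [card_filter, sum_mul, ite_mul, one_mul, zero_mul]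
  rw [sum_comm]
  exact sum_congr rfl fun j _ => by rw [sum_ite_mem, inter_eq_right.2 (hΘ j)]

end Counting

lemma Ham_sub_Ham (l : ℕ) (ω : Site → ℝ) (σ τ : Site → ℤ) :
    Ham l ω σ - Ham l ω τ =
      1 / 2 * ((∑ x ∈ lamBox l, ∑ y ∈ nbrs x with y ∈ lamBox l, (τ x * τ y - σ x * σ y) : ℤ) : ℝ) +
        ∑ x ∈ lamBox l, ∑ y ∈ nbrs x with y ∉ lamBox l, ((τ x - σ x : ℤ) : ℝ) * ω y := by
  simp only [Ham, Int.cast_sum, Int.cast_sub, sub_mul, sum_sub_distrib]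
  ring

section Energy

variable {l : ℕ} {σ : Site → ℤ} {ε : ℤ} {ω : Site → ℝ} {p : ℕ} {Θs : Fin p → Finset Site}

lemma foldr_flipC_mul_sub_mul (hσ : ∀ x ∈ lamBox l, σ x = 1 ∨ σ x = -1) (hε : ε = 1 ∨ ε = -1)
    (hcs : ∀ j, IsEContour l σ ε (Θs j)) (hinj : Function.Injective Θs) {x y : Site}
    (hx : x ∈ lamBox l) (hy : y ∈ lamBox l) (hxy : y ∈ nbrs x) :
    (List.ofFn Θs).foldr flipC σ x * (List.ofFn Θs).foldr flipC σ y - σ x * σ y =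
      2 * #{j | Xor (x ∈ Θs j) (y ∈ Θs j)} := by
  rw [foldr_flipC_ofFn_mul]
  rcases Nat.le_one_iff_eq_zero_or_eq_one.1 (card_filter_xor_le_one hcs hinj hxy) with h | h
  · simp [h]
  · obtain ⟨j, hj⟩ := card_eq_one.1 h
    have hsep : Xor (x ∈ Θs j) (y ∈ Θs j) := by
      simpa using (hj ▸ mem_singleton_self j : j ∈ ({j | Xor (x ∈ Θs j) (y ∈ Θs j)} : Finset _))
    have hσσ : σ x * σ y = -1 := by
      rcases hsep with ⟨hxj, hyj⟩ | ⟨hyj, hxj⟩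
      · exact (hcs j).spin_mul_eq_neg_one hσ hε hxj hyj hy hxy
      · rw [mul_comm]
        exact (hcs j).spin_mul_eq_neg_one hσ hε hyj hxj hx (mem_nbrs_comm.1 hxy)
    rw [h, hσσ]
    norm_num

lemma sum_sum_card_filter_xor_eq (hcs : ∀ j, IsEContour l σ ε (Θs j)) :
    ∑ x ∈ lamBox l, ∑ y ∈ nbrs x with y ∈ lamBox l, #{j | Xor (x ∈ Θs j) (y ∈ Θs j)} =
      2 * ∑ j, innerBondCount l (Θs j) :=
  calc _ = ∑ x ∈ lamBox l, ∑ j, ∑ y ∈ nbrs x with y ∈ lamBox l,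
          (if Xor (x ∈ Θs j) (y ∈ Θs j) then 1 else 0) :=
        sum_congr rfl fun x _ => by rw [sum_comm]; simp only [card_filter]
    _ = ∑ j, ∑ x ∈ lamBox l, ∑ y ∈ nbrs x with y ∈ lamBox l,
          (if Xor (x ∈ Θs j) (y ∈ Θs j) then 1 else 0) := sum_comm
    _ = ∑ j, 2 * innerBondCount l (Θs j) :=
        sum_congr rfl fun j _ => sum_sum_ite_xor_eq (hcs j).subset_lamBox
    _ = 2 * ∑ j, innerBondCount l (Θs j) := (mul_sum _ _ _).symm

lemma sum_sum_foldr_flipC_mul_sub_mul (hσ : ∀ x ∈ lamBox l, σ x = 1 ∨ σ x = -1)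
    (hε : ε = 1 ∨ ε = -1) (hcs : ∀ j, IsEContour l σ ε (Θs j)) (hinj : Function.Injective Θs) :
    ∑ x ∈ lamBox l, ∑ y ∈ nbrs x with y ∈ lamBox l,
        ((List.ofFn Θs).foldr flipC σ x * (List.ofFn Θs).foldr flipC σ y - σ x * σ y) =
      4 * ∑ j, (innerBondCount l (Θs j) : ℤ) := by
  rw [sum_congr rfl fun x hx => sum_congr rfl fun y hy =>
    foldr_flipC_mul_sub_mul hσ hε hcs hinj hx (mem_filter.1 hy).2 (mem_filter.1 hy).1]
  simp only [← mul_sum]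
  rw [show (4 : ℤ) = 2 * 2 by norm_num, mul_assoc]
  exact_mod_cast congrArg (2 * ·) (sum_sum_card_filter_xor_eq hcs)

lemma abs_foldr_flipC_sub_le {x : Site} (hσx : σ x = 1 ∨ σ x = -1) :
    |(List.ofFn Θs).foldr flipC σ x - σ x| ≤ 2 * #{j | x ∈ Θs j} := by
  rw [foldr_flipC_ofFn_apply]
  rcases Nat.eq_zero_or_pos #{j | x ∈ Θs j} with h | h
  · simp [h]
  · have habs : |σ x| = 1 := by rcases hσx with h | h <;> simp [h]
    calc |(-1) ^ #{j | x ∈ Θs j} * σ x - σ x| ≤ |(-1) ^ #{j | x ∈ Θs j} * σ x| + |σ x| :=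
          abs_sub _ _
      _ = 2 := by rw [abs_mul, abs_pow, abs_neg, abs_one, one_pow, habs]; norm_num
      _ ≤ 2 * #{j | x ∈ Θs j} := by omega

lemma neg_two_mul_sum_outerBondCount_le (hσ : ∀ x ∈ lamBox l, σ x = 1 ∨ σ x = -1)
    (hω : ∀ y ∈ extBdry l, |ω y| ≤ 1) (hΘ : ∀ j, Θs j ⊆ lamBox l) :
    -(2 * ∑ j, (outerBondCount l (Θs j) : ℝ)) ≤
      ∑ x ∈ lamBox l, ∑ y ∈ nbrs x with y ∉ lamBox l,
        (((List.ofFn Θs).foldr flipC σ x - σ x : ℤ) : ℝ) * ω y := by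
  have hcount : ∑ j, (outerBondCount l (Θs j) : ℝ) =
      ∑ x ∈ lamBox l, ∑ y ∈ nbrs x with y ∉ lamBox l, (#{j | x ∈ Θs j} : ℝ) := by
    simp only [sum_const, nsmul_eq_mul, mul_comm (#(filter _ (nbrs _)) : ℝ)]
    exact_mod_cast (sum_card_filter_mem_mul hΘ _).symm
  rw [hcount, mul_sum, ← sum_neg_distrib]
  refine sum_le_sum fun x hx => ?_
  rw [mul_sum, ← sum_neg_distrib]
  refine sum_le_sum fun y hy => ?_
  rw [mem_filter] at hy
  have hωy : |ω y| ≤ 1 := hω y ⟨hy.2, x, hx, d1_eq_one_of_mem_nbrs hy.1⟩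
  have hflip : |(((List.ofFn Θs).foldr flipC σ x - σ x : ℤ) : ℝ)| ≤ 2 * #{j | x ∈ Θs j} := by
    exact_mod_cast abs_foldr_flipC_sub_le (hσ x hx)
  set a : ℝ := (((List.ofFn Θs).foldr flipC σ x - σ x : ℤ) : ℝ)
  calc -(2 * (#{j | x ∈ Θs j} : ℝ)) ≤ -(|a| * |ω y|) :=
        neg_le_neg ((mul_le_of_le_one_right (abs_nonneg a) hωy).trans hflip)
    _ ≤ a * ω y := by rw [← abs_mul]; exact neg_abs_le _

lemma sum_outerBondCount_le (hcs : ∀ j, IsEContour l σ ε (Θs j))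
    (hinj : Function.Injective Θs) : ∑ j, outerBondCount l (Θs j) ≤ 4 * l :=
  calc ∑ j, outerBondCount l (Θs j)
      = ∑ x ∈ lamBox l, #{j | x ∈ Θs j} * #{y ∈ nbrs x | y ∉ lamBox l} :=
        (sum_card_filter_mem_mul (fun j => (hcs j).subset_lamBox) _).symm
    _ ≤ ∑ x ∈ lamBox l, #{y ∈ nbrs x | y ∉ lamBox l} := by
        refine sum_le_sum fun x _ => ?_
        rcases eq_empty_or_nonempty {y ∈ nbrs x | y ∉ lamBox l} with h | ⟨y, hy⟩
        · simp [h]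
        · rw [mem_filter] at hy
          exact mul_le_of_le_one_left (Nat.zero_le _) (card_filter_mem_le_one hcs hinj hy.1 hy.2)
    _ ≤ 4 * l := sum_card_nbrs_notMem_lamBox_le l

lemma sum_card_contourOf_sub_le_half_dH (hσ : ∀ x ∈ lamBox l, σ x = 1 ∨ σ x = -1)
    (hε : ε = 1 ∨ ε = -1)
    (hω : ∀ y ∈ extBdry l, |ω y| ≤ 1) (hcs : ∀ j, IsEContour l σ ε (Θs j))
    (hinj : Function.Injective Θs) :
    ∑ j, ((#(contourOf (Θs j)) : ℝ) - 2 * outerBondCount l (Θs j)) ≤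
      1 / 2 * dH l ω (List.ofFn Θs) σ := by
  have hΘ : ∀ j, Θs j ⊆ lamBox l := fun j => (hcs j).subset_lamBox
  have hcontour : ∑ j, (#(contourOf (Θs j)) : ℝ) ≤
      ∑ j, (innerBondCount l (Θs j) : ℝ) + ∑ j, (outerBondCount l (Θs j) : ℝ) := by
    rw [← sum_add_distrib]
    exact_mod_cast sum_le_sum fun j _ => card_contourOf_le (hΘ j)
  have hbdry := neg_two_mul_sum_outerBondCount_le hσ hω hΘ
  rw [dH, Ham_sub_Ham, sum_sum_foldr_flipC_mul_sub_mul hσ hε hcs hinj, sum_sub_distrib, ← mul_sum]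
  push_cast at hbdry ⊢
  linarith

end Energy

lemma div_add_mul_sub_le_of_lower_bounds {A G L a b κ : ℝ} (ha : 0 ≤ a) (hb : 0 ≤ b)
    (hκ : 0 < κ) (h₁ : a * L - b ≤ A) (h₂ : G - κ * L ≤ A) : a / (a + κ) * G - b ≤ A := by
  have hpos : 0 < a + κ := by linarith
  rw [div_mul_eq_mul_div, sub_le_iff_le_add, div_le_iff₀ hpos]
  nlinarith [mul_le_mul_of_nonneg_left h₂ ha, mul_le_mul_of_nonneg_left h₁ hκ.le, mul_nonneg ha hb]

/-- If (ε)-contours `γ₁,…,γ_p` at `σ` in `Λ(l)` satisfy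
`(1/2)Δ_{γ₁,…,γ_p}H^ω(σ) ≥ c₁ l - c₂` with `c₁, c₂ ≥ 0`, then
`(1/2)Δ_{γ₁,…,γ_p}H^ω(σ) ≥ (c₁/(c₁+8)) ∑_j |γ_j| - c₂`. -/
theorem stmt7 (l : ℕ) (σ : Site → ℤ) (hσ : ∀ x ∈ lamBox l, σ x = 1 ∨ σ x = -1)
    (ε : ℤ) (hε : ε = 1 ∨ ε = -1) (ω : Site → ℝ)
    (hω : ∀ y ∈ extBdry l, |ω y| ≤ 1)
    (p : ℕ) (Θs : Fin p → Finset Site)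
    (hcs : ∀ j, IsEContour l σ ε (Θs j)) (hinj : Function.Injective Θs)
    (c₁ c₂ : ℝ) (hc₁ : 0 ≤ c₁) (hc₂ : 0 ≤ c₂)
    (hyp : (1/2 : ℝ) * dH l ω (List.ofFn Θs) σ ≥ c₁ * l - c₂) :
    (1/2 : ℝ) * dH l ω (List.ofFn Θs) σ ≥
      c₁ / (c₁ + 8) * ∑ j, ((contourOf (Θs j)).card : ℝ) - c₂ := by
  have hpeierls := sum_card_contourOf_sub_le_half_dH (ω := ω) hσ hε hω hcs hinj
  have hbox : (∑ j, outerBondCount l (Θs j) : ℝ) ≤ 4 * l := by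
    exact_mod_cast sum_outerBondCount_le hcs hinj
  rw [sum_sub_distrib, ← mul_sum] at hpeierls
  exact div_add_mul_sub_le_of_lower_bounds hc₁ hc₂ (by norm_num) hyp (by linarith)
end
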